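/- arXiv:2602.20481 — 4 statements merged into one kernel-verified Lean document; each statement's English description precedes it below -/
import Mathlib

section
/- Assume char(k) ≠ 2 and let (M, h) be a non-degenerate hermitian space over E of rank n with respect to ι. Then the unitary group U(M, h) := {σ ∈ Aut_E(M) : h(σu, σv) = h(u, v) for all u, v ∈ M} is isomorphic as a group to GL_n(K), where K := k[x]/(p) is the field obtained by adjoining a root of p to k. -/
/-!
Since `p` and `p*` are coprime, `E = k[x]/(p p*)` is `K × K*` with `K* = k[x]/(p*)`, and since
`x ↦ x⁻¹` exchanges the roots of `p` and of `p*`, the involution `ι` swaps the two factors through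
ring isomorphisms `σ : K → K*`, `σ' : K* → K`. In a basis, `U(M, h)` is the group of invertible
`A` with `Aᵀ G ι(A) = G`, where the Gram matrix `G` is invertible because `h` is non-degenerate and
`E` is artinian. Writing `A = (A₁, A₂)` and `G = (G₁, G₂)`, this condition amounts to its
`K*`-component `A₂ᵀ G₂ σ(A₁) = G₂`: the `K`-component is the `σ'`-image of its transpose. Hence
`A₂` is determined by `A₁`, every `A₁ ∈ GL_n(K)` occurs, and `A ↦ A₁` is the isomorphism.
-/

open Polynomial

/-- `p*(x) = p(0)⁻¹ x^(deg p) p(1/x)`. -/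
noncomputable def pstar {k : Type*} [Field k] (p : k[X]) : k[X] :=
  C (p.eval 0)⁻¹ * p.reverse

/-- The unitary group of a hermitian form `h` on an `E`-module `M`, as a subgroup of the
group of `E`-linear automorphisms of `M`. -/
def unitaryGroup {E : Type*} [CommRing E] {M : Type*} [AddCommGroup M] [Module E M]
    (h : M → M → E) : Subgroup (M ≃ₗ[E] M) where
  carrier := {σ | ∀ u v, h (σ u) (σ v) = h u v}
  one_mem' := fun _ _ => rfl
  mul_mem' := by
    intro a b ha hb u v
    have : ∀ w, (a * b) w = a (b w) := fun w => rfl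
    rw [this, this, ha, hb]
  inv_mem' := by
    intro a ha u v
    have h1 : ∀ w, a (a⁻¹ w) = w := fun w => a.apply_symm_apply w
    conv_rhs => rw [← h1 u, ← h1 v]
    exact (ha (a⁻¹ u) (a⁻¹ v)).symm

section Reciprocal

variable {k : Type*} [Field k] {p : k[X]}

lemma monic_pstar (hp0 : p.eval 0 ≠ 0) : (pstar p).Monic := by
  have htrail : p.trailingCoeff = p.eval 0 := by
    rw [trailingCoeff, natTrailingDegree_eq_zero.mpr (Or.inr (by rwa [coeff_zero_eq_eval_zero])),
      coeff_zero_eq_eval_zero]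
  rw [Monic, pstar, leadingCoeff_mul, leadingCoeff_C, reverse_leadingCoeff, htrail,
    inv_mul_cancel₀ hp0]

lemma natDegree_pstar (hp0 : p.eval 0 ≠ 0) : (pstar p).natDegree = p.natDegree := by
  rw [pstar, natDegree_C_mul (inv_ne_zero hp0), reverse_natDegree,
    natTrailingDegree_eq_zero.mpr (Or.inr (by rwa [coeff_zero_eq_eval_zero])), Nat.sub_zero]

lemma isCoprime_pstar (hmonic : p.Monic) (hirr : Irreducible p) (hp0 : p.eval 0 ≠ 0)
    (hps : pstar p ≠ p) : IsCoprime p (pstar p) :=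
  hirr.coprime_iff_not_dvd.mpr fun hdvd => hps <| .symm <|
    eq_of_dvd_of_natDegree_le_of_leadingCoeff hdvd (natDegree_pstar hp0).le
      (by rw [hmonic.leadingCoeff, (monic_pstar hp0).leadingCoeff])

lemma aeval_pstar_eq_zero_iff {S : Type*} [CommRing S] [Algebra k S] (hp0 : p.eval 0 ≠ 0)
    {y z : S} (hyz : y * z = 1) : aeval y (pstar p) = 0 ↔ aeval z p = 0 := by
  let : Invertible z := ⟨y, hyz, (mul_comm z y).trans hyz⟩
  have hunit : IsUnit (algebraMap k S (p.eval 0)⁻¹) :=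
    (isUnit_iff_ne_zero.mpr (inv_ne_zero hp0)).map _
  rw [pstar, map_mul, aeval_C, hunit.mul_right_eq_zero, aeval_def, aeval_def,
    ← eval₂_reverse_eq_zero_iff _ z]
  rfl

end Reciprocal

namespace AdjoinRoot

variable {R : Type*} [CommRing R]

lemma algHomOfDvd_mk {f g : R[X]} (hgf : g ∣ f) (q : R[X]) :
    algHomOfDvd R f g hgf (mk f q) = mk g q := by
  rw [coe_algHomOfDvd]
  exact aeval_eq q

lemma bijective_algHomOfDvd_prod {f g : R[X]} (hfg : IsCoprime f g) :
    Function.Bijective (((algHomOfDvd R (f * g) f (dvd_mul_right f g)) :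
      AdjoinRoot (f * g) →+* AdjoinRoot f).prod
        (algHomOfDvd R (f * g) g (dvd_mul_left g f) : AdjoinRoot (f * g) →+* AdjoinRoot g)) := by
  refine ⟨(injective_iff_map_eq_zero _).mpr fun a ha => ?_, fun y => ?_⟩
  · obtain ⟨q, rfl⟩ := mk_surjective a
    simp only [RingHom.prod_apply, Prod.mk_eq_zero, RingHom.coe_coe, algHomOfDvd_mk,
      mk_eq_zero] at ha
    exact mk_eq_zero.mpr (hfg.mul_dvd ha.1 ha.2)
  · obtain ⟨a, b, hab⟩ := hfg
    obtain ⟨q₁, hq₁⟩ := mk_surjective y.1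
    obtain ⟨q₂, hq₂⟩ := mk_surjective y.2
    refine ⟨mk _ (q₁ * b * g + q₂ * a * f), Prod.ext ?_ ?_⟩ <;>
      simp only [RingHom.prod_apply, RingHom.coe_coe, algHomOfDvd_mk, ← hq₁, ← hq₂, mk_eq_mk]
    exacts [⟨(q₂ - q₁) * a, by linear_combination q₁ * hab⟩,
      ⟨(q₁ - q₂) * b, by linear_combination q₂ * hab⟩]

lemma exists_comp_algHomOfDvd_eq {P q r : R[X]} (hq : q ∣ P) (hr : r ∣ P)
    (ι : AdjoinRoot P →ₐ[R] AdjoinRoot P) (h : aeval (algHomOfDvd R P r hr (ι (root P))) q = 0) :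
    ∃ σ : AdjoinRoot q →+* AdjoinRoot r,
      σ.comp (algHomOfDvd R P q hq) = (algHomOfDvd R P r hr : AdjoinRoot P →+* AdjoinRoot r).comp
        (ι : AdjoinRoot P →+* AdjoinRoot P) :=
  ⟨liftAlgHom q (Algebra.ofId R _) _ h, congrArg AlgHom.toRingHom <|
    algHom_ext (g₁ := (liftAlgHom q (Algebra.ofId R _) _ h).comp (algHomOfDvd R P q hq))
      (g₂ := (algHomOfDvd R P r hr).comp ι)
      (by rw [AlgHom.comp_apply, algHomOfDvd_root]; exact liftAlgHom_root _ _ _ _)⟩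

end AdjoinRoot

open Matrix

section SesquilinearForm

variable {R M n : Type*} [CommRing R] [AddCommGroup M] [Module R M] [Fintype n] [DecidableEq n]

noncomputable def Module.Basis.linearEquivToGL (e : Module.Basis n R M) : (M ≃ₗ[R] M) ≃* GL n R :=
  (LinearMap.GeneralLinearGroup.generalLinearEquiv R M).symm.trans
    (Units.mapEquiv (LinearMap.toMatrixAlgEquiv e).toMulEquiv)

def sesqFormOfConj (ι : R →+* R) (h : M → M → R)
    (hadd : ∀ u₁ u₂ v, h (u₁ + u₂) v = h u₁ v + h u₂ v)
    (hsmul : ∀ (a : R) u v, h (a • u) v = a * h u v)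
    (hconj : ∀ u v, h v u = ι (h u v)) : M →ₗ[R] M →ₛₗ[ι] R :=
  LinearMap.mk₂'ₛₗ (RingHom.id R) ι h hadd hsmul
    (fun u v₁ v₂ => by rw [hconj, hadd, map_add, ← hconj, ← hconj])
    (fun a u v => by rw [hconj, hsmul, map_mul, ← hconj]; rfl)

variable {ι : R →+* R}

lemma toMatrix₂_compl₂_comp (e : Module.Basis n R M) (B : M →ₗ[R] M →ₛₗ[ι] R) (f : M →ₗ[R] M) :
    LinearMap.toMatrix₂ e e ((B.compl₂ f).comp f) =
      (LinearMap.toMatrix e e f)ᵀ * LinearMap.toMatrix₂ e e B *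
        (LinearMap.toMatrix e e f).map ι := by
  ext i j
  simp only [LinearMap.toMatrix₂_apply, LinearMap.comp_apply, LinearMap.compl₂_apply, mul_apply,
    transpose_apply, map_apply, LinearMap.toMatrix_apply, Finset.sum_mul]
  rw [apply_eq_dotProduct_toMatrix₂_mulVec e e]
  simp only [dotProduct, RingHom.coe_id, Function.comp_apply, id_eq, mulVec,
    LinearMap.toMatrix₂_apply, Finset.mul_sum]
  rw [Finset.sum_comm]
  refine Finset.sum_congr rfl fun _ _ => Finset.sum_congr rfl fun _ _ => by ring

lemma forall_apply_apply_eq_iff_toMatrix (e : Module.Basis n R M) (B : M →ₗ[R] M →ₛₗ[ι] R)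
    (f : M →ₗ[R] M) : (∀ u v, B (f u) (f v) = B u v) ↔
      (LinearMap.toMatrix e e f)ᵀ * LinearMap.toMatrix₂ e e B * (LinearMap.toMatrix e e f).map ι =
        LinearMap.toMatrix₂ e e B := by
  rw [← toMatrix₂_compl₂_comp, (LinearMap.toMatrix₂ e e).injective.eq_iff, LinearMap.ext_iff₂]
  rfl

lemma isUnit_toMatrix₂_of_separatingLeft [IsArtinianRing R] (e : Module.Basis n R M)
    {B : M →ₗ[R] M →ₛₗ[ι] R} (hB : B.SeparatingLeft) : IsUnit (LinearMap.toMatrix₂ e e B) := by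
  refine vecMul_surjective_iff_isUnit.mp <| IsArtinian.surjective_of_injective_endomorphism
    (vecMulLinear (LinearMap.toMatrix₂ e e B)) fun c d hcd => sub_eq_zero.mp ?_
  have hzero : (c - d) ᵥ* LinearMap.toMatrix₂ e e B = 0 := by
    rw [sub_vecMul]; exact sub_eq_zero.mpr hcd
  have hrepr : e.equivFun (e.equivFun.symm (c - d)) = c - d := e.equivFun.apply_symm_apply _
  have : e.equivFun.symm (c - d) = 0 := hB _ fun v => by
    rw [apply_eq_dotProduct_toMatrix₂_mulVec e e]
    change e.equivFun (e.equivFun.symm (c - d)) ⬝ᵥ _ = 0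
    rw [hrepr, dotProduct_mulVec, hzero, zero_dotProduct]
  rw [← hrepr, this, map_zero]

end SesquilinearForm

section SplitInvolution

variable {n E K K' : Type*} [Fintype n] [CommRing E] [CommRing K] [CommRing K']
  {ι : E →+* E} {π : E →+* K} {π' : E →+* K'} {σ : K →+* K'} {σ' : K' →+* K}

lemma injective_prod_mapMatrix [DecidableEq n] (hπ : Function.Injective (π.prod π')) :
    Function.Injective ((π.mapMatrix : Matrix n n E →+* _).prod π'.mapMatrix) := fun A B hAB => by
  ext i j
  exact hπ (Prod.ext (congrFun₂ (congrArg Prod.fst hAB) i j)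
    (congrFun₂ (congrArg Prod.snd hAB) i j))

lemma surjective_prod_mapMatrix [DecidableEq n] (hπ : Function.Surjective (π.prod π')) :
    Function.Surjective ((π.mapMatrix : Matrix n n E →+* _).prod π'.mapMatrix) := fun N => by
  choose f hf using fun i j => hπ (N.1 i j, N.2 i j)
  refine ⟨of f, Prod.ext ?_ ?_⟩ <;> ext i j
  exacts [congrArg Prod.fst (hf i j), congrArg Prod.snd (hf i j)]

lemma map_transpose_mul_mul_map (hσ : σ.comp π = π'.comp ι) (G A : Matrix n n E) :
    (Aᵀ * G * A.map ι).map π' = (A.map π')ᵀ * G.map π' * (A.map π).map σ := by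
  rw [map_map, ← RingHom.coe_comp, hσ, RingHom.coe_comp, ← map_map, Matrix.map_mul,
    Matrix.map_mul, transpose_map]

lemma transpose_mul_mul_map_eq_iff [DecidableEq n] (hπ : Function.Injective (π.prod π'))
    (hσ : σ.comp π = π'.comp ι) (hσ' : σ'.comp π' = π.comp ι) (hσσ' : σ'.comp σ = RingHom.id K)
    {G : Matrix n n E} (hG : G.map ι = Gᵀ) (A : Matrix n n E) :
    Aᵀ * G * A.map ι = G ↔ (A.map π')ᵀ * G.map π' * (A.map π).map σ = G.map π' := by
  have hππ : ((A.map ι).map ι).map π = A.map π := by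
    rw [map_map, map_map, ← RingHom.coe_comp, ← RingHom.coe_comp, ← hσ', RingHom.comp_assoc, ← hσ,
      ← RingHom.comp_assoc, hσσ', RingHom.id_comp]
  -- the `π`-component of a matrix that is hermitian modulo `ker π` is fixed by its `π'`-component
  have hrecover : ∀ X : Matrix n n E, (X.map ι)ᵀ.map π = X.map π →
      X.map π = ((X.map π').map σ')ᵀ := by
    intro X hX
    rw [← hX, map_map, ← RingHom.coe_comp, hσ', transpose_map, map_map]; rfl
  rw [← map_transpose_mul_mul_map hσ]
  refine ⟨fun hA => by rw [hA], fun hA' => injective_prod_mapMatrix hπ (Prod.ext ?_ hA')⟩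
  have hGt : (G.map ι)ᵀ = G := by rw [hG, transpose_transpose]
  change (Aᵀ * G * A.map ι).map π = G.map π
  rw [hrecover (Aᵀ * G * A.map ι) ?_, hrecover G (by rw [hGt]), hA']
  simp only [Matrix.map_mul, transpose_mul, transpose_map, transpose_transpose, hGt, hππ,
    Matrix.mul_assoc]

lemma eq_one_of_transpose_mul_mul_map_eq [DecidableEq n] (hπ : Function.Injective (π.prod π'))
    (hσ : σ.comp π = π'.comp ι) {G : Matrix n n E} (hG : IsUnit G) {A : Matrix n n E}
    (hA : Aᵀ * G * A.map ι = G) (hA1 : A.map π = 1) : A = 1 := by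
  have hG' : IsUnit (G.map π') := hG.map π'.mapMatrix
  have hA' := congrArg (Matrix.map · π') hA
  simp only [map_transpose_mul_mul_map hσ, hA1, Matrix.map_one σ (map_zero σ) (map_one σ),
    Matrix.mul_one, hG'.mul_eq_right] at hA'
  refine injective_prod_mapMatrix hπ (Prod.ext ?_ ?_)
  · simpa using hA1
  · simpa using congrArg transpose hA'

lemma exists_transpose_mul_mul_map_eq [DecidableEq n] (hπ : Function.Bijective (π.prod π'))
    (hσ : σ.comp π = π'.comp ι) (hσ' : σ'.comp π' = π.comp ι) (hσσ' : σ'.comp σ = RingHom.id K)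
    {G : Matrix n n E} (hGι : G.map ι = Gᵀ) (hG : IsUnit G) (N : GL n K) :
    ∃ A : GL n E, (A : Matrix n n E)ᵀ * G * (A : Matrix n n E).map ι = G ∧
      GeneralLinearGroup.map π A = N := by
  obtain ⟨g, hg⟩ : IsUnit (G.map π') := hG.map π'.mapMatrix
  let s : GL n K' := GeneralLinearGroup.map σ N
  -- `N'ᵀ = g s⁻¹ g⁻¹` is the only solution of `N'ᵀ * G.map π' * s = G.map π'`
  let N' : Matrix n n K' := ((g * s⁻¹ * g⁻¹ : GL n K') : Matrix n n K')ᵀ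
  have hN' : N'ᵀ * G.map π' * (N : Matrix n n K).map σ = G.map π' := by
    rw [transpose_transpose, ← hg]
    change ((g * s⁻¹ * g⁻¹ : GL n K') : Matrix n n K') * g * s = g
    rw [← Units.val_mul, ← Units.val_mul]
    congr 1
    group
  obtain ⟨A, hA⟩ := surjective_prod_mapMatrix hπ.2 ((N : Matrix n n K), N')
  have hAunit : IsUnit A := by
    let φ := RingEquiv.ofBijective ((π.mapMatrix : Matrix n n E →+* _).prod π'.mapMatrix)
      ⟨injective_prod_mapMatrix hπ.1, surjective_prod_mapMatrix hπ.2⟩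
    refine (isUnit_map_iff φ A).mp ?_
    change IsUnit (((π.mapMatrix : Matrix n n E →+* _).prod π'.mapMatrix) A)
    rw [hA]
    exact Prod.isUnit_iff.mpr ⟨N.isUnit, (isUnit_transpose _).mpr (Units.isUnit _)⟩
  have hAπ : A.map π = N := congrArg Prod.fst hA
  have hAπ' : A.map π' = N' := congrArg Prod.snd hA
  refine ⟨hAunit.unit, (transpose_mul_mul_map_eq_iff hπ.1 hσ hσ' hσσ' hGι _).mpr ?_, Units.ext ?_⟩
  · rwa [IsUnit.unit_spec, hAπ, hAπ']
  · exact hAπ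

end SplitInvolution

theorem nonempty_unitaryGroup_mulEquiv_GL {n E K K' M : Type*} [Fintype n] [DecidableEq n]
    [CommRing E] [IsArtinianRing E] [CommRing K] [CommRing K'] [AddCommGroup M] [Module E M]
    {ι : E →+* E} {π : E →+* K} {π' : E →+* K'} {σ : K →+* K'} {σ' : K' →+* K}
    (hπ : Function.Bijective (π.prod π')) (hσ : σ.comp π = π'.comp ι)
    (hσ' : σ'.comp π' = π.comp ι) (hσσ' : σ'.comp σ = RingHom.id K)
    (B : M →ₗ[E] M →ₛₗ[ι] E) (hB : ∀ u v, B v u = ι (B u v)) (hnd : B.SeparatingLeft)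
    (e : Module.Basis n E M) :
    Nonempty (unitaryGroup (fun u v => B u v) ≃* GL n K) := by
  set G := LinearMap.toMatrix₂ e e B
  have hG : IsUnit G := isUnit_toMatrix₂_of_separatingLeft e hnd
  have hGι : G.map ι = Gᵀ := by
    ext i j
    exact (hB _ _).symm
  have hmem : ∀ f : M ≃ₗ[E] M, f ∈ unitaryGroup (fun u v => B u v) ↔
      (e.linearEquivToGL f : Matrix n n E)ᵀ * G * (e.linearEquivToGL f : Matrix n n E).map ι = G :=
    fun f => forall_apply_apply_eq_iff_toMatrix e B f.toLinearMap
  let Φ : unitaryGroup (fun u v => B u v) →* GL n K :=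
    (GeneralLinearGroup.map π).comp (e.linearEquivToGL.toMonoidHom.comp (Subgroup.subtype _))
  refine ⟨MulEquiv.ofBijective Φ ⟨(injective_iff_map_eq_one Φ).mpr fun f hf => ?_, fun N => ?_⟩⟩
  · have hf1 : (e.linearEquivToGL f : Matrix n n E).map π = 1 := congrArg Units.val hf
    have hA1 := eq_one_of_transpose_mul_mul_map_eq hπ.1 hσ hG ((hmem f).mp f.2) hf1
    exact Subtype.ext <| e.linearEquivToGL.map_eq_one_iff.mp (Units.ext hA1)
  · obtain ⟨A, hA, hAN⟩ := exists_transpose_mul_mul_map_eq hπ hσ hσ' hσσ' hGι hG N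
    refine ⟨⟨e.linearEquivToGL.symm A, (hmem _).mpr (by simpa using hA)⟩, ?_⟩
    simp [Φ, hAN]

theorem stmt_2_general {k : Type*} [Field k] (p : k[X])
    (hmonic : p.Monic) (hirr : Irreducible p) (hp0 : p.eval 0 ≠ 0) (hps : pstar p ≠ p)
    (ι : AdjoinRoot (p * pstar p) ≃ₐ[k] AdjoinRoot (p * pstar p))
    (hι : ∀ a, ι (ι a) = a)
    (hιx : ι (AdjoinRoot.root (p * pstar p)) * AdjoinRoot.root (p * pstar p) = 1)
    (M : Type*) [AddCommGroup M] [Module (AdjoinRoot (p * pstar p)) M]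
    (h : M → M → AdjoinRoot (p * pstar p))
    (hadd : ∀ u₁ u₂ v, h (u₁ + u₂) v = h u₁ v + h u₂ v)
    (hsmul : ∀ (a : AdjoinRoot (p * pstar p)) u v, h (a • u) v = a * h u v)
    (hconj : ∀ u v, h v u = ι (h u v))
    (hnd : ∀ u, (∀ v, h u v = 0) → u = 0)
    (n : ℕ) (e : Module.Basis (Fin n) (AdjoinRoot (p * pstar p)) M) :
    Nonempty (unitaryGroup h ≃* Matrix.GeneralLinearGroup (Fin n) (AdjoinRoot p)) := by
  have hp : p ∣ p * pstar p := dvd_mul_right _ _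
  have hp' : pstar p ∣ p * pstar p := dvd_mul_left _ _
  let π : AdjoinRoot (p * pstar p) →+* AdjoinRoot p := AdjoinRoot.algHomOfDvd k _ _ hp
  let π' : AdjoinRoot (p * pstar p) →+* AdjoinRoot (pstar p) := AdjoinRoot.algHomOfDvd k _ _ hp'
  have hπ : Function.Bijective (π.prod π') :=
    AdjoinRoot.bijective_algHomOfDvd_prod (isCoprime_pstar hmonic hirr hp0 hps)
  have hπx : π (ι (AdjoinRoot.root _)) * AdjoinRoot.root p = 1 := by
    simpa [π] using congrArg π hιx
  have hπ'x : AdjoinRoot.root (pstar p) * π' (ι (AdjoinRoot.root _)) = 1 := by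
    simpa [π', mul_comm] using congrArg π' hιx
  obtain ⟨σ, hσ⟩ := AdjoinRoot.exists_comp_algHomOfDvd_eq hp hp' ι.toAlgHom <|
    (aeval_pstar_eq_zero_iff hp0 hπ'x).mp ((AdjoinRoot.aeval_eq _).trans AdjoinRoot.mk_self)
  obtain ⟨σ', hσ'⟩ := AdjoinRoot.exists_comp_algHomOfDvd_eq hp' hp ι.toAlgHom <|
    (aeval_pstar_eq_zero_iff hp0 hπx).mpr ((AdjoinRoot.aeval_eq _).trans AdjoinRoot.mk_self)
  have hσσ' : σ'.comp σ = RingHom.id _ := by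
    refine (RingHom.cancel_right fun y => (hπ.2 (y, 0)).imp fun _ h => congrArg Prod.fst h).mp ?_
    rw [RingHom.comp_assoc, hσ, ← RingHom.comp_assoc, hσ', RingHom.comp_assoc]
    exact RingHom.ext fun a => congrArg π (hι a)
  have := (hmonic.mul (monic_pstar hp0)).finite_adjoinRoot
  have := IsArtinianRing.of_finite k (AdjoinRoot (p * pstar p))
  let B := sesqFormOfConj (ι : AdjoinRoot (p * pstar p) →+* _) h hadd hsmul hconj
  exact nonempty_unitaryGroup_mulEquiv_GL hπ hσ hσ' hσσ' B hconj hnd e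

/-- (char k ≠ 2) For a non-degenerate hermitian space `(M,h)` of rank `n` over
`E = k[x]/(p p*)` with respect to the involution `ι`, the unitary group `U(M,h)` is
isomorphic to `GL_n(K)`, where `K = k[x]/(p)`. -/
theorem stmt_2 {k : Type*} [Field k] (hchar : (2 : k) ≠ 0) (p : k[X])
    (hmonic : p.Monic) (hirr : Irreducible p) (hp0 : p.eval 0 ≠ 0) (hps : pstar p ≠ p)
    (ι : AdjoinRoot (p * pstar p) ≃ₐ[k] AdjoinRoot (p * pstar p))
    (hι : ∀ a, ι (ι a) = a)
    (hιx : ι (AdjoinRoot.root (p * pstar p)) * AdjoinRoot.root (p * pstar p) = 1)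
    (M : Type*) [AddCommGroup M] [Module (AdjoinRoot (p * pstar p)) M]
    (h : M → M → AdjoinRoot (p * pstar p))
    (hadd : ∀ u₁ u₂ v, h (u₁ + u₂) v = h u₁ v + h u₂ v)
    (hsmul : ∀ (a : AdjoinRoot (p * pstar p)) u v, h (a • u) v = a * h u v)
    (hconj : ∀ u v, h v u = ι (h u v))
    (hnd : ∀ u, (∀ v, h u v = 0) → u = 0)
    (n : ℕ) (e : Module.Basis (Fin n) (AdjoinRoot (p * pstar p)) M) :
    Nonempty (unitaryGroup h ≃* Matrix.GeneralLinearGroup (Fin n) (AdjoinRoot p)) :=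
  stmt_2_general p hmonic hirr hp0 hps ι hι hιx M h hadd hsmul hconj hnd n e
end

section
/- Let (V, ⟨·,·⟩) be a non-degenerate quadratic space over a field k with char(k) ≠ 2, let σ ∈ O(V) have characteristic polynomial f, and let p̃ be a monic irreducible factor of f with p̃ ≠ p̃* and V_{p̃,σ} ≠ 0. If Ann_{k[x]}(V_{p̃,σ}) = (p̃^s) and Ann_{k[x]}(V_{p̃*,σ}) = ((p̃*)^t) (annihilator ideals of these k[x]-modules), then s = t. -/
open Polynomial

/-- The primary component `V_{q,σ} = {v ∈ V : q(σ)^l v = 0 for some l}`. -/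
noncomputable def primComp {k V : Type*} [Field k] [AddCommGroup V] [Module k V]
    (σ : V →ₗ[k] V) (q : k[X]) : Submodule k V :=
  ⨆ l : ℕ, LinearMap.ker (aeval σ q ^ l)

section Aux

variable {k V : Type*} [Field k] [AddCommGroup V] [Module k V]

private lemma rev_rev {f : k[X]} (h : f.coeff 0 ≠ 0) : f.reverse.reverse = f := by
  have h0 : f.natTrailingDegree = 0 := natTrailingDegree_eq_zero.mpr (Or.inr h)
  ext n
  rw [coeff_reverse, reverse_natDegree, h0, Nat.sub_zero, coeff_reverse, revAt_invol]

private lemma rev_pow (f : k[X]) (m : ℕ) : (f ^ m).reverse = f.reverse ^ m := by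
  induction m with
  | zero => rw [pow_zero, pow_zero, ← C_1, reverse_C]
  | succ n ih => rw [pow_succ, reverse_mul_of_domain, ih, pow_succ]

private lemma unit_of_rev_unit {a : k[X]} (h0 : a.coeff 0 ≠ 0) (h : IsUnit a.reverse) :
    IsUnit a := by
  have ht : a.natTrailingDegree = 0 := natTrailingDegree_eq_zero.mpr (Or.inr h0)
  have hd : a.reverse.natDegree = 0 := natDegree_eq_zero_of_isUnit h
  rw [reverse_natDegree, ht, Nat.sub_zero] at hd
  rw [Polynomial.eq_C_of_natDegree_eq_zero hd]
  exact isUnit_C.mpr (isUnit_iff_ne_zero.mpr h0)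

private lemma irred_rev {p q : k[X]} {c : k} (hp : Irreducible p) (hc : c ≠ 0)
    (hq0 : q.coeff 0 ≠ 0) (hrev : q.reverse = C c * p) : Irreducible q := by
  constructor
  · intro hu
    obtain ⟨a, ha, rfl⟩ := Polynomial.isUnit_iff.mp hu
    rw [reverse_C] at hrev
    have hp' : p = C c⁻¹ * C a := by
      rw [hrev, ← mul_assoc, ← C_mul, inv_mul_cancel₀ hc, C_1, one_mul]
    exact hp.not_isUnit (hp' ▸ (isUnit_C.mpr (isUnit_iff_ne_zero.mpr (inv_ne_zero hc))).mul
      (isUnit_C.mpr ha))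
  · intro a b hab
    have hq0' : q.coeff 0 = a.coeff 0 * b.coeff 0 := by rw [hab, mul_coeff_zero]
    have ha0 : a.coeff 0 ≠ 0 := left_ne_zero_of_mul (hq0' ▸ hq0)
    have hb0 : b.coeff 0 ≠ 0 := right_ne_zero_of_mul (hq0' ▸ hq0)
    have hrevmul : q.reverse = a.reverse * b.reverse := by rw [hab, reverse_mul_of_domain]
    have key : p = (C c⁻¹ * a.reverse) * b.reverse := by
      rw [mul_assoc, ← hrevmul, hrev, ← mul_assoc, ← C_mul, inv_mul_cancel₀ hc, C_1, one_mul]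
    rcases hp.isUnit_or_isUnit key with h | h
    · exact Or.inl (unit_of_rev_unit ha0 (isUnit_of_mul_isUnit_right h))
    · exact Or.inr (unit_of_rev_unit hb0 h)

private lemma hcan (σ : V ≃ₗ[k] V) (i : ℕ) (v : V) :
    (σ.toLinearMap ^ i) ((σ.symm.toLinearMap ^ i) v) = v := by
  induction i generalizing v with
  | zero => simp
  | succ n ih =>
    rw [pow_succ, pow_succ']
    simp only [Module.End.mul_apply, LinearEquiv.coe_coe, LinearEquiv.apply_symm_apply]
    exact ih v

private lemma hcan' (σ : V ≃ₗ[k] V) (i : ℕ) (v : V) :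
    (σ.symm.toLinearMap ^ i) ((σ.toLinearMap ^ i) v) = v := by
  simpa using hcan σ.symm i v

private lemma moveB (B : LinearMap.BilinForm k V) (σ : V ≃ₗ[k] V)
    (hσ : ∀ u v, B (σ u) (σ v) = B u v) (g : k[X]) (u v : V) :
    B (aeval σ.toLinearMap g u) v = B u (aeval σ.symm.toLinearMap g v) := by
  have hstep : ∀ x y : V, B (σ x) y = B x (σ.symm y) := by
    intro x y
    have := hσ x (σ.symm y)
    rwa [LinearEquiv.apply_symm_apply] at this
  have hpow : ∀ (n : ℕ) (x y : V), B ((σ.toLinearMap ^ n) x) y = B x ((σ.symm.toLinearMap ^ n) y) := by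
    intro n
    induction n with
    | zero => simp
    | succ m ih =>
      intro x y
      rw [pow_succ', pow_succ]
      simp only [Module.End.mul_apply, LinearEquiv.coe_coe]
      rw [hstep, ih]
  induction g using Polynomial.induction_on' with
  | add p q hp hq => simp only [map_add, LinearMap.add_apply, map_add, LinearMap.add_apply,
      hp, hq]
  | monomial n a =>
    simp only [aeval_monomial, Module.End.mul_apply, Module.algebraMap_end_apply,
      map_smul, LinearMap.smul_apply, LinearMap.map_smul₂]
    rw [hpow]

private lemma revK (σ : V ≃ₗ[k] V) (g : k[X]) (v : V) :
    aeval σ.toLinearMap g.reverse v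
      = (σ.toLinearMap ^ g.natDegree) (aeval σ.symm.toLinearMap g v) := by
  set n := g.natDegree with hn
  have e1 : aeval σ.toLinearMap g.reverse
      = ∑ i ∈ Finset.range (n + 1), g.reverse.coeff i • σ.toLinearMap ^ i :=
    aeval_eq_sum_range' (Nat.lt_succ_of_le g.reverse_natDegree_le) _
  have e2 : aeval σ.symm.toLinearMap g
      = ∑ i ∈ Finset.range (n + 1), g.coeff i • σ.symm.toLinearMap ^ i :=
    aeval_eq_sum_range' (Nat.lt_succ_of_le le_rfl) _
  rw [e1, e2, LinearMap.sum_apply, LinearMap.sum_apply, map_sum,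
    ← Finset.sum_range_reflect]
  refine Finset.sum_congr rfl fun i hi => ?_
  have hin : i ≤ n := Nat.lt_succ_iff.mp (Finset.mem_range.mp hi)
  have hni : n + 1 - 1 - i = n - i := by omega
  rw [hni]
  have hco : g.reverse.coeff (n - i) = g.coeff i := by
    rw [coeff_reverse, ← hn, ← revAt_le hin, revAt_invol]
  rw [hco]
  simp only [LinearMap.smul_apply, map_smul]
  congr 1
  have hpow : σ.toLinearMap ^ n = σ.toLinearMap ^ (n - i) * σ.toLinearMap ^ i := by
    rw [← pow_add, Nat.sub_add_cancel hin]
  rw [hpow, Module.End.mul_apply, hcan σ i]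

private lemma killtrans (σ : V ≃ₗ[k] V) (g : k[X]) (v : V)
    (h : aeval σ.toLinearMap g.reverse v = 0) :
    aeval σ.symm.toLinearMap g v = 0 := by
  have hk := revK σ g v
  rw [h] at hk
  have h2 := hcan' σ g.natDegree (aeval σ.symm.toLinearMap g v)
  rw [← hk, map_zero] at h2
  exact h2.symm

private lemma master [FiniteDimensional k V]
    (B : LinearMap.BilinForm k V) (hsymm : ∀ u v, B u v = B v u)
    (hBnd : ∀ u, (∀ v, B u v = 0) → u = 0)
    (σ : V ≃ₗ[k] V) (hσ : ∀ u v, B (σ u) (σ v) = B u v)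
    (p q : k[X]) (c c' : k) (hc : c ≠ 0) (hc' : c' ≠ 0)
    (hq : Irreducible q)
    (hpq : p.reverse = C c * q) (hqp : q.reverse = C c' * p)
    (s t : ℕ)
    (hps : ∀ v ∈ primComp σ.toLinearMap p, aeval σ.toLinearMap (p ^ s) v = 0)
    (hqt : ∀ v ∈ primComp σ.toLinearMap q, aeval σ.toLinearMap (q ^ t) v = 0) :
    ∀ u ∈ primComp σ.toLinearMap p, aeval σ.toLinearMap (p ^ t) u = 0 := by
  intro u hu
  set σL := σ.toLinearMap with hσL
  set w := aeval σL (p ^ t) u with hw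
  have hwps : aeval σL (p ^ s) w = 0 := by
    rw [hw, ← Module.End.mul_apply, ← map_mul, ← pow_add, add_comm, pow_add, map_mul,
      Module.End.mul_apply, hps u hu, map_zero]
  suffices hw0 : w = 0 by exact hw0
  apply hBnd
  intro v
  have hf0 : (LinearMap.charpoly σL) ≠ 0 := (LinearMap.charpoly_monic σL).ne_zero
  obtain ⟨b, g, hgq, hfeq⟩ := WfDvdMonoid.max_power_factor hf0 hq
  have hfv : aeval σL (LinearMap.charpoly σL) v = 0 := by
    rw [LinearMap.aeval_self_charpoly]; rfl
  have hcop : IsCoprime (q ^ b) g := (hq.coprime_iff_not_dvd.mpr hgq).pow_left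
  obtain ⟨A, D, hAD⟩ := hcop
  set v₁ := aeval σL (A * q ^ b) v with hv₁def
  set v₂ := aeval σL (D * g) v with hv₂def
  have hv12 : v₁ + v₂ = v := by
    have h1 : aeval σL (A * q ^ b + D * g) v = aeval σL (1 : k[X]) v := by rw [hAD]
    simpa [hv₁def, hv₂def] using h1
  have hv₂q : aeval σL (q ^ b) v₂ = 0 := by
    rw [hv₂def, ← Module.End.mul_apply, ← map_mul]
    have hqb : q ^ b * (D * g) = D * LinearMap.charpoly σL := by rw [hfeq]; ring
    rw [hqb, map_mul, Module.End.mul_apply, hfv, map_zero]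
  have hv₂mem : v₂ ∈ primComp σL q := by
    refine le_iSup (fun l => LinearMap.ker (aeval σL q ^ l)) b ?_
    rw [LinearMap.mem_ker, ← map_pow]
    exact hv₂q
  have hv₂t : aeval σL (q ^ t) v₂ = 0 := hqt v₂ hv₂mem
  have hv₁g : aeval σL g v₁ = 0 := by
    rw [hv₁def, ← Module.End.mul_apply, ← map_mul]
    have hgv : g * (A * q ^ b) = A * LinearMap.charpoly σL := by rw [hfeq]; ring
    rw [hgv, map_mul, Module.End.mul_apply, hfv, map_zero]
  have hBv₂ : B w v₂ = 0 := by
    rw [hw, moveB B σ hσ]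
    have hptrev : aeval σL ((p ^ t).reverse) v₂ = 0 := by
      have hr : (p ^ t).reverse = C (c ^ t) * q ^ t := by
        rw [rev_pow, hpq, mul_pow, ← C_pow]
      rw [hr, map_mul, Module.End.mul_apply, hv₂t, map_zero]
    rw [killtrans σ (p ^ t) v₂ hptrev, map_zero]
  have hcop2 : IsCoprime (q ^ s) g := (hq.coprime_iff_not_dvd.mpr hgq).pow_left
  obtain ⟨A', D', hAD'⟩ := hcop2
  have hv₁eq : aeval σL (A' * q ^ s) v₁ = v₁ := by
    have h1 : aeval σL (A' * q ^ s + D' * g) v₁ = aeval σL (1 : k[X]) v₁ := by rw [hAD']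
    have h2 : aeval σL (D' * g) v₁ = 0 := by
      rw [map_mul, Module.End.mul_apply, hv₁g, map_zero]
    rw [map_add, LinearMap.add_apply, h2, add_zero] at h1
    simpa using h1
  have hBv₁ : B w v₁ = 0 := by
    rw [hsymm w v₁, ← hv₁eq, moveB B σ hσ]
    have hqsw : aeval σ.symm.toLinearMap (q ^ s) w = 0 := by
      apply killtrans
      have hr : (q ^ s).reverse = C (c' ^ s) * p ^ s := by
        rw [rev_pow, hqp, mul_pow, ← C_pow]
      rw [hr, map_mul, Module.End.mul_apply, hwps, map_zero]
    have hz : aeval σ.symm.toLinearMap (A' * q ^ s) w = 0 := by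
      rw [map_mul, Module.End.mul_apply, hqsw, map_zero]
    rw [hz, map_zero]
  calc B w v = B w v₁ + B w v₂ := by rw [← hv12, map_add]
  _ = 0 := by rw [hBv₁, hBv₂, add_zero]

end Aux

/-- if `Ann_{k[x]}(V_{p̃,σ}) = (p̃^s)` and `Ann_{k[x]}(V_{p̃*,σ}) = ((p̃*)^t)`
for a monic irreducible factor `p̃` of the characteristic polynomial of the isometry `σ`
with `p̃ ≠ p̃*` and `V_{p̃,σ} ≠ 0`, then `s = t`. -/
theorem stmt_4 {k V : Type*} [Field k] [AddCommGroup V] [Module k V] [FiniteDimensional k V]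
    (hchar : (2 : k) ≠ 0)
    (B : LinearMap.BilinForm k V) (hsymm : ∀ u v, B u v = B v u)
    (hBnd : ∀ u, (∀ v, B u v = 0) → u = 0)
    (σ : V ≃ₗ[k] V) (hσ : ∀ u v, B (σ u) (σ v) = B u v)
    (pt : k[X]) (hmonic : pt.Monic) (hirr : Irreducible pt)
    (hdvd : pt ∣ LinearMap.charpoly σ.toLinearMap) (hps : pstar pt ≠ pt)
    (hne : primComp σ.toLinearMap pt ≠ ⊥)
    (s t : ℕ) (hs0 : 1 ≤ s) (ht0 : 1 ≤ t)
    -- `Ann(V_{p̃,σ}) = (p̃^s)`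
    (hs1 : ∀ v ∈ primComp σ.toLinearMap pt, aeval σ.toLinearMap (pt ^ s) v = 0)
    (hs2 : ∀ g : k[X], (∀ v ∈ primComp σ.toLinearMap pt, aeval σ.toLinearMap g v = 0) →
      pt ^ s ∣ g)
    -- `Ann(V_{p̃*,σ}) = ((p̃*)^t)`
    (ht1 : ∀ v ∈ primComp σ.toLinearMap (pstar pt),
      aeval σ.toLinearMap ((pstar pt) ^ t) v = 0)
    (ht2 : ∀ g : k[X], (∀ v ∈ primComp σ.toLinearMap (pstar pt),
      aeval σ.toLinearMap g v = 0) → (pstar pt) ^ t ∣ g) :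
    s = t := by
  -- the constant coefficient of `pt` is nonzero
  have hp0 : pt.coeff 0 ≠ 0 := by
    intro h
    have hdX : X ∣ pt := X_dvd_iff.mpr h
    have hassoc : Associated X pt := irreducible_X.associated_of_dvd hirr hdX
    have hX : pt = X := (eq_of_monic_of_associated monic_X hmonic hassoc).symm
    apply hne
    have hker : ∀ l : ℕ, LinearMap.ker (σ.toLinearMap ^ l) = ⊥ := by
      intro l
      rw [LinearMap.ker_eq_bot]
      intro x y hxy
      have hx := hcan' σ l x
      have hy := hcan' σ l y
      rw [hxy] at hx
      rw [← hx, hy]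
    rw [hX]
    simp [primComp, aeval_X, hker]
  have heval : pt.eval 0 = pt.coeff 0 := (Polynomial.coeff_zero_eq_eval_zero pt).symm
  have hq0c : (pstar pt).coeff 0 = (pt.coeff 0)⁻¹ := by
    rw [pstar, mul_coeff_zero, coeff_C, coeff_zero_reverse, hmonic.leadingCoeff, heval]
    simp
  have hcinv : (pt.coeff 0)⁻¹ ≠ 0 := inv_ne_zero hp0
  have hpq : pt.reverse = C (pt.coeff 0) * pstar pt := by
    rw [pstar, heval, ← mul_assoc, ← C_mul, mul_inv_cancel₀ hp0, C_1, one_mul]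
  have hqp : (pstar pt).reverse = C (pt.coeff 0)⁻¹ * pt := by
    rw [pstar, heval, reverse_mul_of_domain, reverse_C, rev_rev hp0]
  have hqirr : Irreducible (pstar pt) :=
    irred_rev hirr hcinv (hq0c ▸ hcinv) hqp
  have h1 : ∀ v ∈ primComp σ.toLinearMap pt, aeval σ.toLinearMap (pt ^ t) v = 0 :=
    master B hsymm hBnd σ hσ pt (pstar pt) (pt.coeff 0) (pt.coeff 0)⁻¹ hp0 hcinv hqirr
      hpq hqp s t hs1 ht1
  have h2 : ∀ v ∈ primComp σ.toLinearMap (pstar pt),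
      aeval σ.toLinearMap ((pstar pt) ^ s) v = 0 :=
    master B hsymm hBnd σ hσ (pstar pt) pt (pt.coeff 0)⁻¹ (pt.coeff 0) hcinv hp0 hirr
      hqp hpq t s ht1 hs1
  have hd1 : pt ^ s ∣ pt ^ t := hs2 _ h1
  have hd2 : (pstar pt) ^ t ∣ (pstar pt) ^ s := ht2 _ h2
  have hle1 : s ≤ t := (pow_dvd_pow_iff hirr.ne_zero hirr.not_isUnit).mp hd1
  have hle2 : t ≤ s := (pow_dvd_pow_iff hqirr.ne_zero hqirr.not_isUnit).mp hd2
  omega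
end

section
/- Let k be a field and p a monic irreducible polynomial over k of degree 2d with p(0) ≠ 0, and let l be a positive integer. In the ring k[x]/(p(x)^l) the class of x is a unit; set s(x) := x^{-d} p(x). Then the 2dl elements { x^i s(x)^j : 0 ≤ i ≤ 2d−1, 0 ≤ j ≤ l−1 } form a basis of k[x]/(p(x)^l) as a k-vector space. -/
open Polynomial

/-!
Write `s = x⁻¹ ^ d * p(x)`, so that `x ^ d * s = p(x)` and `s ^ l = 0`. Dividing `q` by the
monic `p` gives `q(x) s ^ j = (q %ₘ p)(x) s ^ j + (X ^ d * (q /ₘ p))(x) s ^ (j + 1)`; the first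
term is a combination of the `x ^ i s ^ j` with `i < 2d`, so downward induction on `j` shows
that every `q(x)` lies in their span. Since `k[x]/(p ^ l)` has dimension `deg p ^ l = 2dl`,
these `2dl` spanning elements are a basis.
-/

theorem AdjoinRoot.isUnit_mk_of_isCoprime {R : Type*} [CommRing R] {f g : R[X]}
    (h : IsCoprime g f) : IsUnit (AdjoinRoot.mk f g) := by
  obtain ⟨a, b, hab⟩ := h
  refine IsUnit.of_mul_eq_one (AdjoinRoot.mk f a) ?_
  simpa [mul_comm] using congrArg (AdjoinRoot.mk f) hab

theorem AdjoinRoot.aeval_root_surjective {R : Type*} [CommRing R] (f : R[X]) :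
    Function.Surjective (aeval (R := R) (AdjoinRoot.root f)) :=
  fun a => (AdjoinRoot.mk_surjective a).imp fun q hq => (AdjoinRoot.aeval_eq q).trans hq

section PowMulPow

variable {R A : Type*} [CommRing R] [Nontrivial R] [CommRing A] [Algebra R A]
  {p : R[X]} {d l : ℕ} (x : Aˣ)

theorem aeval_mul_pow_mem_span_pow_mul_pow (hmonic : p.Monic) (hdeg : p.natDegree = 2 * d)
    (hs : ((↑x⁻¹ : A) ^ d * aeval (x : A) p) ^ l = 0) (q : R[X]) (j : ℕ) :
    aeval (x : A) q * ((↑x⁻¹ : A) ^ d * aeval (x : A) p) ^ j ∈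
      Submodule.span R (Set.range fun ij : Fin (2 * d) × Fin l =>
        (x : A) ^ (ij.1 : ℕ) * ((↑x⁻¹ : A) ^ d * aeval (x : A) p) ^ (ij.2 : ℕ)) := by
  set s := (↑x⁻¹ : A) ^ d * aeval (x : A) p with hs_def
  set V := Submodule.span R (Set.range fun ij : Fin (2 * d) × Fin l =>
    (x : A) ^ (ij.1 : ℕ) * s ^ (ij.2 : ℕ))
  have hp : aeval (x : A) p = (x : A) ^ d * s := by
    rw [hs_def, ← mul_assoc, ← mul_pow, Units.mul_inv, one_pow, one_mul]
  have hreduced : ∀ r : R[X], r.degree < p.degree → ∀ j < l, aeval (x : A) r * s ^ j ∈ V := by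
    intro r hr j hj
    rcases eq_or_ne r 0 with rfl | hr0
    · simp
    have hrd : r.natDegree < 2 * d := hdeg ▸ natDegree_lt_natDegree hr0 hr
    rw [aeval_eq_sum_range' hrd, Finset.sum_mul]
    refine Submodule.sum_mem _ fun i hi => ?_
    rw [smul_mul_assoc]
    exact Submodule.smul_mem _ _
      (Submodule.subset_span ⟨(⟨i, Finset.mem_range.mp hi⟩, ⟨j, hj⟩), rfl⟩)
  suffices ∀ n j, l ≤ j + n → ∀ q : R[X], aeval (x : A) q * s ^ j ∈ V from
    this l j (by omega) q
  intro n
  induction n with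
  | zero =>
    intro j hj q
    rw [pow_eq_zero_of_le (by omega) hs, mul_zero]
    exact zero_mem V
  | succ n ih =>
    intro j hj q
    by_cases hjl : l ≤ j
    · rw [pow_eq_zero_of_le hjl hs, mul_zero]
      exact zero_mem V
    have hsplit : aeval (x : A) q * s ^ j =
        aeval (x : A) (q %ₘ p) * s ^ j + aeval (x : A) (X ^ d * (q /ₘ p)) * s ^ (j + 1) := by
      conv_lhs => rw [← modByMonic_add_div q p]
      simp only [map_add, map_mul, map_pow, aeval_X, hp]
      ring
    rw [hsplit]
    exact add_mem (hreduced _ (degree_modByMonic_lt q hmonic) j (by omega))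
      (ih (j + 1) (by omega) _)

theorem span_pow_mul_pow_eq_top (hmonic : p.Monic) (hdeg : p.natDegree = 2 * d)
    (hs : ((↑x⁻¹ : A) ^ d * aeval (x : A) p) ^ l = 0)
    (hx : Function.Surjective (aeval (x : A) : R[X] →ₐ[R] A)) :
    Submodule.span R (Set.range fun ij : Fin (2 * d) × Fin l =>
      (x : A) ^ (ij.1 : ℕ) * ((↑x⁻¹ : A) ^ d * aeval (x : A) p) ^ (ij.2 : ℕ)) = ⊤ := by
  refine Submodule.eq_top_iff'.mpr fun a => ?_
  obtain ⟨q, rfl⟩ := hx a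
  simpa using aeval_mul_pow_mem_span_pow_mul_pow x hmonic hdeg hs q 0

end PowMulPow

theorem stmt_8_general {k : Type*} [Field k] (p : k[X]) (d l : ℕ)
    (hmonic : p.Monic) (hdeg : p.natDegree = 2 * d)
    (hp0 : p.eval 0 ≠ 0) :
    IsUnit (AdjoinRoot.root (p ^ l)) ∧
    LinearIndependent k (fun ij : Fin (2 * d) × Fin l =>
        AdjoinRoot.root (p ^ l) ^ (ij.1 : ℕ) *
          (Ring.inverse (AdjoinRoot.root (p ^ l)) ^ d * AdjoinRoot.mk (p ^ l) p) ^ (ij.2 : ℕ)) ∧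
    Submodule.span k (Set.range fun ij : Fin (2 * d) × Fin l =>
        AdjoinRoot.root (p ^ l) ^ (ij.1 : ℕ) *
          (Ring.inverse (AdjoinRoot.root (p ^ l)) ^ d * AdjoinRoot.mk (p ^ l) p) ^ (ij.2 : ℕ)) = ⊤ := by
  have hcop : IsCoprime X (p ^ l) := by
    refine IsCoprime.pow_right (irreducible_X.coprime_iff_not_dvd.mpr ?_)
    rwa [X_dvd_iff, coeff_zero_eq_eval_zero]
  have hunit : IsUnit (AdjoinRoot.root (p ^ l)) := by
    simpa using AdjoinRoot.isUnit_mk_of_isCoprime hcop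
  obtain ⟨u, hu⟩ := hunit
  have hspan := span_pow_mul_pow_eq_top u hmonic hdeg
    (by rw [mul_pow, ← pow_mul, hu, AdjoinRoot.aeval_eq, ← map_pow, AdjoinRoot.mk_self, mul_zero])
    (hu ▸ AdjoinRoot.aeval_root_surjective _)
  rw [← Ring.inverse_unit u, hu, AdjoinRoot.aeval_eq] at hspan
  refine ⟨⟨u, hu⟩, linearIndependent_of_top_le_span_of_card_eq_finrank hspan.ge ?_, hspan⟩
  rw [Fintype.card_prod, Fintype.card_fin, Fintype.card_fin, mul_comm, ← hdeg, ← natDegree_pow]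
  exact finrank_quotient_span_eq_natDegree.symm

/-- Let `p` be a monic irreducible polynomial of degree `2d` over a field `k`
with `p(0) ≠ 0`, and `l ≥ 1`. In `k[x]/(p^l)` the class of `x` is a unit, and setting
`s = x^{-d} p(x)`, the `2dl` elements `x^i s^j` (`0 ≤ i ≤ 2d-1`, `0 ≤ j ≤ l-1`) form a
`k`-basis of `k[x]/(p^l)`. -/
theorem stmt_8 {k : Type*} [Field k] (p : k[X]) (d l : ℕ)
    (hmonic : p.Monic) (hirr : Irreducible p) (hdeg : p.natDegree = 2 * d)
    (hp0 : p.eval 0 ≠ 0) (hl : 1 ≤ l) :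
    IsUnit (AdjoinRoot.root (p ^ l)) ∧
    LinearIndependent k (fun ij : Fin (2 * d) × Fin l =>
        AdjoinRoot.root (p ^ l) ^ (ij.1 : ℕ) *
          (Ring.inverse (AdjoinRoot.root (p ^ l)) ^ d * AdjoinRoot.mk (p ^ l) p) ^ (ij.2 : ℕ)) ∧
    Submodule.span k (Set.range fun ij : Fin (2 * d) × Fin l =>
        AdjoinRoot.root (p ^ l) ^ (ij.1 : ℕ) *
          (Ring.inverse (AdjoinRoot.root (p ^ l)) ^ d * AdjoinRoot.mk (p ^ l) p) ^ (ij.2 : ℕ)) = ⊤ :=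
  stmt_8_general p d l hmonic hdeg hp0
end

section
/- Let (V, ⟨·,·⟩) be a non-degenerate quadratic space over a field k with char(k) ≠ 2, σ ∈ O(V), q(x) = x+1 or x−1, and let U := V_{q,σ}^{(l)} be a summand of the orthogonal decomposition of V_{q,σ} that is non-degenerate and free over k[x]/(q^l) with l odd. Then, with orthogonal complements taken inside U, one has q(σ)^{(l−1)/2} U = (q(σ)^{(l+1)/2} U)^⊥. -/
open Polynomial

/-- `W` is a `σ`-invariant subspace which, as a `k[x]/(g)`-module with `x` acting as `σ`,
is free of rank `m`. -/
def IsFreeMod {k V : Type*} [Field k] [AddCommGroup V] [Module k V]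
    (σ : V →ₗ[k] V) (W : Submodule k V) (g : k[X]) (m : ℕ) : Prop :=
  ∃ (hW : ∀ x ∈ W, σ x ∈ W) (e : ↥W ≃ₗ[k] (Fin m → AdjoinRoot g)),
    ∀ w, e (σ.restrict hW w) = AdjoinRoot.root g • e w

/-- for `q = x±1`, `l` odd, and `U = V_{q,σ}^{(l)}` a summand of Milnor's
orthogonal decomposition (non-degenerate and free over `k[x]/(q^l)`), one has
`q(σ)^{(l-1)/2} U = (q(σ)^{(l+1)/2} U)^⊥`, orthogonal complement taken inside `U`. -/
theorem stmt_12 {k V : Type*} [Field k] [AddCommGroup V] [Module k V]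
    [FiniteDimensional k V] (hchar : (2 : k) ≠ 0)
    (B : LinearMap.BilinForm k V) (hsymm : ∀ u v, B u v = B v u)
    (hBnd : ∀ u, (∀ v, B u v = 0) → u = 0)
    (σ : V ≃ₗ[k] V) (hσ : ∀ u v, B (σ u) (σ v) = B u v)
    (q : k[X]) (hq : q = X + 1 ∨ q = X - 1)
    (l : ℕ) (hl : Odd l) (U : Submodule k V)
    (hUinv : ∀ x ∈ U, σ.toLinearMap x ∈ U)
    (hUle : U ≤ primComp σ.toLinearMap q)
    (n : ℕ) (hUfree : IsFreeMod σ.toLinearMap U (q ^ l) n)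
    (hUnd : ∀ u ∈ U, (∀ v ∈ U, B u v = 0) → u = 0) :
    ∀ u : V, u ∈ Submodule.map (aeval σ.toLinearMap q ^ ((l - 1) / 2)) U ↔
      (u ∈ U ∧ ∀ s ∈ Submodule.map (aeval σ.toLinearMap q ^ ((l + 1) / 2)) U, B u s = 0) := by
  classical
  obtain ⟨m, hm⟩ := hl
  have ha : (l - 1) / 2 = m := by omega
  have hb : (l + 1) / 2 = m + 1 := by omega
  rw [ha, hb]
  obtain ⟨hW, e, he⟩ := hUfree
  set σL := σ.toLinearMap with hσL
  set σU := σL.restrict hW with hσU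
  -- q is monic, nonzero
  have hqm : q.Monic := by
    rcases hq with rfl | rfl
    · simpa using monic_X_add_C (1 : k)
    · simpa using monic_X_sub_C (1 : k)
  have hq0 : q ≠ 0 := hqm.ne_zero
  -- restriction is compatible with aeval
  have hres : ∀ (p : k[X]) (w : ↥U), ((aeval σU p) w : V) = (aeval σL p) (w : V) := by
    intro p
    induction p using Polynomial.induction_on with
    | C a => intro w; simp
    | add p r hp hr => intro w; simp [hp w, hr w]
    | monomial nn a hp =>
      intro w
      have h1 : C a * X ^ (nn + 1) = C a * X ^ nn * X := by ring
      have e1 : (aeval σU) (C a * X ^ nn * X) = (aeval σU) (C a * X ^ nn) * σU := by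
        rw [map_mul, aeval_X]
      have e2 : (aeval σL) (C a * X ^ nn * X) = (aeval σL) (C a * X ^ nn) * σL := by
        rw [map_mul, aeval_X]
      rw [h1, e1, e2, Module.End.mul_apply, Module.End.mul_apply, hp (σU w),
        LinearMap.restrict_coe_apply]
  -- e intertwines aeval with multiplication by mk p
  have hint : ∀ (p : k[X]) (w : ↥U), e ((aeval σU p) w) = (AdjoinRoot.mk (q ^ l) p) • e w := by
    intro p
    induction p using Polynomial.induction_on with
    | C a =>
      intro w
      rw [aeval_C, Module.algebraMap_end_apply, map_smul, AdjoinRoot.mk_C,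
        ← AdjoinRoot.algebraMap_eq, algebraMap_smul]
    | add p r hp hr => intro w; simp [hp w, hr w, add_smul]
    | monomial nn a hp =>
      intro w
      have h1 : C a * X ^ (nn + 1) = C a * X ^ nn * X := by ring
      have e1 : (aeval σU) (C a * X ^ nn * X) = (aeval σU) (C a * X ^ nn) * σU := by
        rw [map_mul, aeval_X]
      rw [h1, e1, Module.End.mul_apply, hp (σU w), he w, ← mul_smul,
        ← AdjoinRoot.mk_X (f := q ^ l), ← map_mul]
  -- q^l kills U
  have hzero : ∀ w : ↥U, (aeval σU) (q ^ l) w = 0 := by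
    intro w
    apply e.injective
    rw [hint, map_zero, AdjoinRoot.mk_self, zero_smul]
  have hτl : ∀ w ∈ U, ((aeval σL q) ^ l) w = 0 := by
    intro w hw
    have h1 := hres (q ^ l) ⟨w, hw⟩
    rw [hzero] at h1
    have h2 : (aeval σL) (q ^ l) w = 0 := by rw [← h1]; rfl
    rw [map_pow] at h2
    exact h2
  -- kernel of q^m equals range of q^(m+1)
  have hker : LinearMap.ker ((aeval σU) (q ^ m)) = LinearMap.range ((aeval σU) (q ^ (m+1))) := by
    have hlsplit : q ^ l = q ^ m * q ^ (m + 1) := by rw [← pow_add]; congr 1; omega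
    ext w
    simp only [LinearMap.mem_ker, LinearMap.mem_range]
    constructor
    · intro hw
      have hz : ∀ i, ∃ y : AdjoinRoot (q ^ l),
          AdjoinRoot.mk (q ^ l) (q ^ (m+1)) * y = e w i := by
        intro i
        obtain ⟨p, hp⟩ := AdjoinRoot.mk_surjective (e w i)
        have h2 : AdjoinRoot.mk (q ^ l) (q ^ m * p) = 0 := by
          rw [map_mul, hp]
          have h3 := hint (q ^ m) w
          rw [hw, map_zero] at h3
          have h4 := congrFun h3.symm i
          simpa using h4
        have hdvd : q ^ l ∣ q ^ m * p := AdjoinRoot.mk_eq_zero.mp h2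
        rw [hlsplit] at hdvd
        have h5 : q ^ (m+1) ∣ p := (mul_dvd_mul_iff_left (pow_ne_zero m hq0)).mp hdvd
        obtain ⟨r, hr⟩ := h5
        exact ⟨AdjoinRoot.mk _ r, by rw [← map_mul, ← hr, hp]⟩
      choose z hz using hz
      refine ⟨e.symm z, ?_⟩
      apply e.injective
      rw [hint, e.apply_symm_apply]
      funext i
      rw [Pi.smul_apply, smul_eq_mul, hz]
    · rintro ⟨y, rfl⟩
      have h2 : (aeval σU) (q ^ m) ((aeval σU) (q ^ (m+1)) y) = (aeval σU) (q ^ l) y := by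
        rw [← Module.End.mul_apply, ← map_mul, ← hlsplit]
      rw [h2, hzero]
  have hrank : Module.finrank k (LinearMap.range ((aeval σU) (q ^ m)))
      + Module.finrank k (LinearMap.range ((aeval σU) (q ^ (m+1)))) = Module.finrank k ↥U := by
    rw [← hker]
    exact LinearMap.finrank_range_add_finrank_ker _
  -- maps on V vs maps on U
  have hmap : ∀ j : ℕ, Submodule.map ((aeval σL q) ^ j) U
      = Submodule.map U.subtype (LinearMap.range ((aeval σU) (q ^ j))) := by
    intro j
    ext u
    constructor
    · rintro ⟨w, hw, rfl⟩
      refine ⟨(aeval σU) (q ^ j) ⟨w, hw⟩, ⟨⟨w, hw⟩, rfl⟩, ?_⟩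
      show ((aeval σU) (q ^ j) ⟨w, hw⟩ : V) = ((aeval σL q) ^ j) w
      rw [hres, map_pow]
    · rintro ⟨x, ⟨y, rfl⟩, rfl⟩
      refine ⟨(y : V), y.2, ?_⟩
      show ((aeval σL q) ^ j) (y : V) = ((aeval σU) (q ^ j) y : V)
      rw [hres, map_pow]
  -- bilinear form restricted to U
  set S' := LinearMap.range ((aeval σU) (q ^ (m+1))) with hS'
  set B' := B.restrict U with hB'
  have hBrefl : B'.IsRefl := by
    intro x y hxy
    have h1 : B (x : V) (y : V) = 0 := hxy
    show B (y : V) (x : V) = 0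
    rw [hsymm]; exact h1
  have horthtop : B'.orthogonal ⊤ = ⊥ := by
    ext x
    simp only [LinearMap.BilinForm.mem_orthogonal_iff, Submodule.mem_bot]
    constructor
    · intro hx
      refine Subtype.ext (hUnd x x.2 fun v hv => ?_)
      rw [hsymm]
      exact hx ⟨v, hv⟩ trivial
    · rintro rfl
      intro nn _
      simp [LinearMap.BilinForm.IsOrtho]
  have hcount : Module.finrank k S' + Module.finrank k (B'.orthogonal S')
      = Module.finrank k ↥U := by
    have h := LinearMap.BilinForm.finrank_add_finrank_orthogonal hBrefl S'
    rw [horthtop, inf_bot_eq, finrank_bot, add_zero] at h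
    exact h
  -- adjointness of τ
  have hflip : ∀ u v : V, B (σ u) v = B u (σ.symm v) := by
    intro u v
    conv_lhs => rw [← σ.apply_symm_apply v]
    exact hσ u (σ.symm v)
  set P := σ.symm.toLinearMap with hP
  set τ := aeval σL q with hτ
  obtain ⟨c, hcb⟩ : ∃ c : k, ∀ u v : V, B (τ u) v = c * B u (P (τ v)) := by
    rcases hq with rfl | rfl
    · refine ⟨1, fun u v => ?_⟩
      have h1 : ∀ w, τ w = σ w + w := by
        intro w
        simp [hτ, LinearMap.add_apply, hσL]
      rw [h1 u, one_mul, h1 v]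
      have h2 : P (σ v + v) = v + σ.symm v := by simp [hP]
      rw [h2, map_add B, LinearMap.add_apply, map_add (B u), hflip]
      exact add_comm _ _
    · refine ⟨-1, fun u v => ?_⟩
      have h1 : ∀ w, τ w = σ w - w := by
        intro w
        simp [hτ, LinearMap.sub_apply, hσL]
      rw [h1 u, h1 v]
      have h2 : P (σ v - v) = v - σ.symm v := by simp [hP]
      rw [h2, map_sub B, LinearMap.sub_apply, map_sub (B u), hflip]
      ring
  have hiter : ∀ (j : ℕ) (u v : V), B ((τ ^ j) u) v = c ^ j * B u (((P * τ) ^ j) v) := by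
    intro j
    induction j with
    | zero => intro u v; simp
    | succ j ih =>
      intro u v
      have h1 : (τ ^ (j+1)) u = (τ ^ j) (τ u) := by
        rw [pow_succ, Module.End.mul_apply]
      have h2 : ((P * τ) ^ (j+1)) v = (P * τ) (((P * τ) ^ j) v) := by
        rw [pow_succ', Module.End.mul_apply]
      rw [h1, ih, hcb, h2, pow_succ, Module.End.mul_apply]
      ring
  have hστ : σL * τ = τ * σL := by
    have h1 : σL * τ = aeval σL (X * q) := by rw [map_mul, aeval_X]
    have h2 : τ * σL = aeval σL (q * X) := by rw [map_mul, aeval_X]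
    rw [h1, h2, mul_comm]
  have hPσ : ∀ x, P (σL x) = x := by intro x; simp [hP, hσL]
  have hσP : ∀ x, σL (P x) = x := by intro x; simp [hP, hσL]
  have hcomm : ∀ v, P (τ v) = τ (P v) := by
    intro v
    conv_lhs => rw [← hσP v]
    have h2 := congrFun (congrArg DFunLike.coe hστ) (P v)
    simp only [Module.End.mul_apply] at h2
    rw [← h2, hPσ]
  have hCommute : Commute P τ :=
    LinearMap.ext fun v => by
      simp only [Module.End.mul_apply]
      exact hcomm v
  have hkey : ∀ v ∈ U, ∀ w ∈ U, B ((τ ^ (m+1)) v) ((τ ^ m) w) = 0 := by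
    intro v hv w hw
    rw [hiter (m+1)]
    have h4 : (τ ^ (m+1)) ((τ ^ m) w) = (τ ^ l) w := by
      rw [← Module.End.mul_apply, ← pow_add, (by omega : m + 1 + m = l)]
    have h1 : (((P * τ) ^ (m+1))) ((τ ^ m) w) = 0 := by
      rw [hCommute.mul_pow, Module.End.mul_apply, h4, hτl w hw, map_zero]
    rw [h1]
    simp
  -- final assembly
  have hOmem : ∀ u : V, (u ∈ U ∧ ∀ s ∈ Submodule.map U.subtype S', B u s = 0)
      ↔ u ∈ Submodule.map U.subtype (B'.orthogonal S') := by
    intro u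
    constructor
    · rintro ⟨hu, h⟩
      refine ⟨⟨u, hu⟩, ?_, rfl⟩
      intro s hs
      show B (s : V) u = 0
      rw [← hsymm]
      exact h _ ⟨s, hs, rfl⟩
    · rintro ⟨x, hx, rfl⟩
      refine ⟨x.2, ?_⟩
      rintro s ⟨s', hs', rfl⟩
      have h2 : B (s' : V) (x : V) = 0 := hx s' hs'
      rw [hsymm]
      exact h2
  have hle : Submodule.map U.subtype (LinearMap.range ((aeval σU) (q ^ m)))
      ≤ Submodule.map U.subtype (B'.orthogonal S') := by
    rintro u ⟨x, ⟨w, rfl⟩, rfl⟩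
    refine ⟨_, ?_, rfl⟩
    rintro s ⟨v, rfl⟩
    show B (((aeval σU) (q ^ (m+1)) v : ↥U) : V) (((aeval σU) (q ^ m) w : ↥U) : V) = 0
    rw [hres, hres, map_pow, map_pow]
    exact hkey _ v.2 _ w.2
  have hfr : Module.finrank k (Submodule.map U.subtype (LinearMap.range ((aeval σU) (q ^ m))))
      = Module.finrank k (Submodule.map U.subtype (B'.orthogonal S')) := by
    rw [Submodule.finrank_map_subtype_eq, Submodule.finrank_map_subtype_eq]
    omega
  have hEq := Submodule.eq_of_le_of_finrank_eq hle hfr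
  intro u
  rw [hmap m, hmap (m+1), hEq]
  exact (hOmem u).symm
end
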